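/- For all a, b ∈ ℝ, the first-order Taylor remainder of the truncated double-well potential satisfies |F(b) − F(a) − f(a)(b − a)| ≤ (b − a)²; in particular F(b) − F(a) ≤ f(a)(b − a) + (b − a)². (This is the estimate, with L/2 = 1, that makes the explicit stabilized treatment of the double-well potential energy stable.) -/

import Mathlib

/-!
`F` is `C¹` with derivative `f`, and `f` is `2`-Lipschitz (`f' = 3φ² - 1` on `[-1, 1]`, `2`
outside). For a `C¹` function `g` with `K`-Lipschitz derivative, `a` is a global maximum of
`x ↦ ±(g x - g a - g' a (x - a)) - K/2 (x - a)²`, since its derivative always points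
towards `a`; this gives the Taylor remainder bound with constant `K/2 = 1`.
-/

/-- The truncated double-well potential. -/
noncomputable def F (φ : ℝ) : ℝ :=
  if φ < -1 then (φ + 1) ^ 2
  else if φ ≤ 1 then (1 / 4) * (φ ^ 2 - 1) ^ 2
  else (φ - 1) ^ 2

/-- The derivative of the truncated double-well potential. -/
noncomputable def f (φ : ℝ) : ℝ :=
  if φ < -1 then 2 * (φ + 1)
  else if φ ≤ 1 then φ ^ 3 - φ
  else 2 * (φ - 1)

open Set

theorem image_le_of_hasDerivAt_mul_sub_nonpos {φ φ' : ℝ → ℝ} {a : ℝ}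
    (hφ : ∀ x, HasDerivAt φ (φ' x) x) (hφ' : ∀ x, φ' x * (x - a) ≤ 0) (b : ℝ) :
    φ b ≤ φ a := by
  have hcont : Continuous φ := continuous_iff_continuousAt.2 fun x ↦ (hφ x).continuousAt
  rcases lt_trichotomy a b with hab | rfl | hba
  · obtain ⟨c, ⟨hac, -⟩, hc⟩ :=
      exists_hasDerivAt_eq_slope φ φ' hab hcont.continuousOn fun x _ ↦ hφ x
    have : φ' c ≤ 0 := nonpos_of_mul_nonpos_left (hφ' c) (sub_pos.2 hac)
    rw [hc, div_nonpos_iff] at this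
    rcases this with ⟨-, h⟩ | ⟨h, -⟩ <;> linarith
  · rfl
  · obtain ⟨c, ⟨-, hca⟩, hc⟩ :=
      exists_hasDerivAt_eq_slope φ φ' hba hcont.continuousOn fun x _ ↦ hφ x
    have : 0 ≤ φ' c := nonneg_of_mul_nonpos_left (hφ' c) (sub_neg.2 hca)
    rw [hc, div_nonneg_iff] at this
    rcases this with ⟨h, -⟩ | ⟨-, h⟩ <;> linarith

theorem sub_sub_mul_le_of_hasDerivAt_of_lipschitzWith {g g' : ℝ → ℝ} {K : NNReal}
    (hg : ∀ x, HasDerivAt g (g' x) x) (hg' : LipschitzWith K g') (a b : ℝ) :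
    g b - g a - g' a * (b - a) ≤ K / 2 * (b - a) ^ 2 := by
  have key := image_le_of_hasDerivAt_mul_sub_nonpos
    (φ := fun x ↦ g x - g a - g' a * (x - a) - K / 2 * (x - a) ^ 2)
    (φ' := fun x ↦ g' x - g' a - K * (x - a)) (a := a) (fun x ↦ ?_) (fun x ↦ ?_) b
  · simpa using key
  · have hlin := (hasDerivAt_id' x).sub_const a
    refine ((((hg x).sub_const (g a)).sub (hlin.const_mul (g' a))).sub
      ((hlin.pow 2).const_mul ((K : ℝ) / 2))).congr_deriv ?_
    ring
  · have h := hg'.dist_le_mul x a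
    rw [Real.dist_eq, Real.dist_eq] at h
    calc (g' x - g' a - K * (x - a)) * (x - a)
        = (g' x - g' a) * (x - a) - K * |x - a| ^ 2 := by rw [sq_abs]; ring
      _ ≤ |g' x - g' a| * |x - a| - K * |x - a| ^ 2 := by
          rw [← abs_mul]; gcongr; exact le_abs_self _
      _ ≤ K * |x - a| * |x - a| - K * |x - a| ^ 2 := by gcongr
      _ = 0 := by ring

theorem abs_sub_sub_mul_le_of_hasDerivAt_of_lipschitzWith {g g' : ℝ → ℝ} {K : NNReal}
    (hg : ∀ x, HasDerivAt g (g' x) x) (hg' : LipschitzWith K g') (a b : ℝ) :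
    |g b - g a - g' a * (b - a)| ≤ K / 2 * (b - a) ^ 2 := by
  have upper := sub_sub_mul_le_of_hasDerivAt_of_lipschitzWith hg hg' a b
  have lower := sub_sub_mul_le_of_hasDerivAt_of_lipschitzWith (fun x ↦ (hg x).neg) hg'.neg a b
  simp only [Pi.neg_apply] at lower
  rw [abs_le]
  constructor <;> linarith

theorem hasDerivAt_ite_lt {u u' v v' : ℝ → ℝ} {p : ℝ} (hu : ∀ x, HasDerivAt u (u' x) x)
    (hv : ∀ x, HasDerivAt v (v' x) x) (hp : u p = v p) (hp' : u' p = v' p) (x : ℝ) :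
    HasDerivAt (fun y ↦ if y < p then u y else v y) (if x < p then u' x else v' x) x := by
  rcases lt_trichotomy x p with hx | rfl | hx
  · rw [if_pos hx]
    refine (hu x).congr_of_eventuallyEq ?_
    filter_upwards [Iio_mem_nhds hx] with y (hy : y < p)
    rw [if_pos hy]
  · rw [if_neg (lt_irrefl x), ← hasDerivWithinAt_univ, ← Iic_union_Ici]
    refine HasDerivWithinAt.union ?_ ?_
    · refine ((hp' ▸ hu x).hasDerivWithinAt).congr_of_eventuallyEq ?_ (by simp [hp])
      filter_upwards [self_mem_nhdsWithin] with y (hy : y ≤ x)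
      rcases hy.lt_or_eq with hy | rfl
      · rw [if_pos hy]
      · simp [hp]
    · refine (hv x).hasDerivWithinAt.congr_of_eventuallyEq ?_ (by simp)
      filter_upwards [self_mem_nhdsWithin] with y (hy : x ≤ y)
      rw [if_neg hy.not_gt]
  · rw [if_neg hx.not_gt]
    refine (hv x).congr_of_eventuallyEq ?_
    filter_upwards [Ioi_mem_nhds hx] with y (hy : p < y)
    rw [if_neg (lt_asymm hy)]

theorem hasDerivAt_ite_le {u u' v v' : ℝ → ℝ} {p : ℝ} (hu : ∀ x, HasDerivAt u (u' x) x)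
    (hv : ∀ x, HasDerivAt v (v' x) x) (hp : u p = v p) (hp' : u' p = v' p) (x : ℝ) :
    HasDerivAt (fun y ↦ if y ≤ p then u y else v y) (if x ≤ p then u' x else v' x) x := by
  have ite_le_eq_ite_lt {w z : ℝ → ℝ} (hw : w p = z p) (y : ℝ) :
      (if y ≤ p then w y else z y) = if y < p then w y else z y := by
    rcases lt_trichotomy y p with hy | rfl | hy
    · simp [hy, hy.le]
    · simp [hw]
    · simp [hy.not_ge, hy.not_gt]
  rw [funext (ite_le_eq_ite_lt hp), ite_le_eq_ite_lt hp']
  exact hasDerivAt_ite_lt hu hv hp hp' x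

theorem hasDerivAt_F (x : ℝ) : HasDerivAt F (f x) x := by
  refine hasDerivAt_ite_lt (p := -1) (u := fun y ↦ (y + 1) ^ 2) (u' := fun y ↦ 2 * (y + 1))
    (fun y ↦ ?_)
    (hasDerivAt_ite_le (p := 1) (u := fun y ↦ 1 / 4 * (y ^ 2 - 1) ^ 2) (u' := fun y ↦ y ^ 3 - y)
      (v := fun y ↦ (y - 1) ^ 2) (v' := fun y ↦ 2 * (y - 1))
      (fun y ↦ ?_) (fun y ↦ ?_) (by norm_num) (by norm_num))
    (by norm_num) (by norm_num) x
  · exact (((hasDerivAt_id' y).add_const 1).pow 2).congr_deriv (by ring)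
  · exact (((hasDerivAt_pow 2 y).sub_const 1).pow 2 |>.const_mul (1 / 4)).congr_deriv
      (by ring)
  · exact (((hasDerivAt_id' y).sub_const 1).pow 2).congr_deriv (by ring)

theorem hasDerivAt_f (x : ℝ) :
    HasDerivAt f (if x < -1 then 2 else if x ≤ 1 then 3 * x ^ 2 - 1 else 2) x := by
  refine hasDerivAt_ite_lt (p := -1) (u := fun y ↦ 2 * (y + 1)) (u' := fun _ ↦ 2)
    (fun y ↦ ?_)
    (hasDerivAt_ite_le (p := 1) (u := fun y ↦ y ^ 3 - y) (u' := fun y ↦ 3 * y ^ 2 - 1)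
      (v := fun y ↦ 2 * (y - 1)) (v' := fun _ ↦ 2)
      (fun y ↦ ?_) (fun y ↦ ?_) (by norm_num) (by norm_num))
    (by norm_num) (by norm_num) x
  · exact (((hasDerivAt_id' y).add_const 1).const_mul 2).congr_deriv (by ring)
  · exact ((hasDerivAt_pow 3 y).sub (hasDerivAt_id' y)).congr_deriv (by ring)
  · exact (((hasDerivAt_id' y).sub_const 1).const_mul 2).congr_deriv (by ring)

theorem lipschitzWith_f : LipschitzWith 2 f := by
  refine lipschitzOnWith_univ.1 <| convex_univ.lipschitzOnWith_of_nnnorm_hasDerivWithin_le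
    (fun x _ ↦ (hasDerivAt_f x).hasDerivWithinAt) fun x _ ↦ ?_
  rw [← NNReal.coe_le_coe, coe_nnnorm, NNReal.coe_ofNat, Real.norm_eq_abs, abs_le]
  split_ifs
  · norm_num
  · constructor <;> nlinarith
  · norm_num

/-- First-order Taylor remainder estimate for the truncated double-well potential:
`|F(b) - F(a) - f(a)(b-a)| ≤ (b-a)²`, and in particular
`F(b) - F(a) ≤ f(a)(b-a) + (b-a)²`. -/
theorem F_taylor_remainder :
    ∀ a b : ℝ,
      |F b - F a - f a * (b - a)| ≤ (b - a) ^ 2 ∧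
      F b - F a ≤ f a * (b - a) + (b - a) ^ 2 := by
  intro a b
  have h : |F b - F a - f a * (b - a)| ≤ (b - a) ^ 2 := by
    simpa using abs_sub_sub_mul_le_of_hasDerivAt_of_lipschitzWith hasDerivAt_F lipschitzWith_f a b
  exact ⟨h, by linarith [le_abs_self (F b - F a - f a * (b - a))]⟩
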